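/- Let n ≥ 1 be a natural number and α, β > −1 be real, and let Ω(z) = (1/4)·[(L²−1)(1−tanh²z) − 2α²(1+tanh z) − 2β²(1−tanh z)] for z ∈ ℝ, where L = 2n+α+β+1. Then |β² − α²| < L² − 1, so that x_e = (β² − α²)/(L² − 1) lies in (−1,1); moreover, with z_e = arctanh(x_e), the function Ω is strictly increasing on (−∞, z_e] and strictly decreasing on [z_e, ∞), so Ω attains its unique global maximum at z_e. -/
import Mathlib


open Real Filter Set

/-- The inverse hyperbolic tangent. -/
noncomputable def arctanh (x : ℝ) : ℝ := (1 / 2) * Real.log ((1 + x) / (1 - x))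

private lemma tanh_eq' (x : ℝ) :
    Real.tanh x = (Real.exp (2 * x) - 1) / (Real.exp (2 * x) + 1) := by
  rw [Real.tanh_eq_sinh_div_cosh, Real.sinh_eq, Real.cosh_eq, two_mul, Real.exp_add,
    Real.exp_neg]
  have h1 : Real.exp x ≠ 0 := (Real.exp_pos x).ne'
  have h2 : Real.exp x * Real.exp x + 1 ≠ 0 := by positivity
  have h3 : Real.exp x + (Real.exp x)⁻¹ ≠ 0 := by positivity
  field_simp

private lemma tanh_strictMono' : StrictMono Real.tanh := by
  intro a b hab
  have h : Real.exp (2 * a) < Real.exp (2 * b) := Real.exp_lt_exp.2 (by linarith)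
  have ha : 0 < Real.exp (2 * a) := Real.exp_pos _
  have hb : 0 < Real.exp (2 * b) := Real.exp_pos _
  rw [tanh_eq', tanh_eq', div_lt_div_iff₀ (by positivity) (by positivity)]
  nlinarith

private lemma tanh_arctanh' {x : ℝ} (h1 : -1 < x) (h2 : x < 1) :
    Real.tanh (arctanh x) = x := by
  have hx1 : (0:ℝ) < 1 + x := by linarith
  have hx2 : (0:ℝ) < 1 - x := by linarith
  have hpos : 0 < (1 + x) / (1 - x) := div_pos hx1 hx2
  rw [tanh_eq']
  have h : 2 * arctanh x = Real.log ((1 + x) / (1 - x)) := by unfold arctanh; ring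
  rw [h, Real.exp_log hpos]
  rw [div_eq_iff (by positivity)]
  field_simp
  ring

set_option maxHeartbeats 1000000 in
theorem stmt5 (n : ℕ) (hn : 1 ≤ n) (α β : ℝ) (hα : -1 < α) (hβ : -1 < β)
    (L : ℝ) (hL : L = 2 * n + α + β + 1)
    (Ω : ℝ → ℝ)
    (hΩ : ∀ z : ℝ,
      Ω z = (1 / 4) * ((L ^ 2 - 1) * (1 - Real.tanh z ^ 2)
        - 2 * α ^ 2 * (1 + Real.tanh z) - 2 * β ^ 2 * (1 - Real.tanh z))) :
    |β ^ 2 - α ^ 2| < L ^ 2 - 1 ∧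
    (β ^ 2 - α ^ 2) / (L ^ 2 - 1) ∈ Set.Ioo (-1 : ℝ) 1 ∧
    StrictMonoOn Ω (Set.Iic (arctanh ((β ^ 2 - α ^ 2) / (L ^ 2 - 1)))) ∧
    StrictAntiOn Ω (Set.Ici (arctanh ((β ^ 2 - α ^ 2) / (L ^ 2 - 1)))) ∧
    ∀ z : ℝ, z ≠ arctanh ((β ^ 2 - α ^ 2) / (L ^ 2 - 1)) →
      Ω z < Ω (arctanh ((β ^ 2 - α ^ 2) / (L ^ 2 - 1))) := by
  have hN : (1 : ℝ) ≤ (n : ℝ) := by exact_mod_cast hn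
  have hα1 : (0:ℝ) < α + 1 := by linarith
  have hβ1 : (0:ℝ) < β + 1 := by linarith
  have habs1 : β ^ 2 - α ^ 2 < L ^ 2 - 1 := by
    nlinarith [mul_pos hα1 hβ1, mul_pos hα1 hα1, sq_nonneg (α - β), sq_nonneg (α + β),
      mul_nonneg (sub_nonneg.2 hN) hα1.le, mul_nonneg (sub_nonneg.2 hN) hβ1.le,
      mul_nonneg (sub_nonneg.2 hN) (sub_nonneg.2 hN)]
  have habs2 : -(L ^ 2 - 1) < β ^ 2 - α ^ 2 := by
    nlinarith [mul_pos hα1 hβ1, mul_pos hβ1 hβ1, sq_nonneg (α - β), sq_nonneg (α + β),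
      mul_nonneg (sub_nonneg.2 hN) hα1.le, mul_nonneg (sub_nonneg.2 hN) hβ1.le,
      mul_nonneg (sub_nonneg.2 hN) (sub_nonneg.2 hN)]
  have hK : (0:ℝ) < L ^ 2 - 1 := by nlinarith [abs_nonneg (β ^ 2 - α ^ 2), abs_lt.2 ⟨habs2, habs1⟩]
  set D := β ^ 2 - α ^ 2 with hD
  set K := L ^ 2 - 1 with hKdef
  have habs : |D| < K := abs_lt.2 ⟨habs2, habs1⟩
  have hxe1 : -1 < D / K := (lt_div_iff₀ hK).2 (by linarith)
  have hxe2 : D / K < 1 := (div_lt_one hK).2 habs1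
  set xe := D / K with hxe
  set ze := arctanh xe with hze
  have hte : Real.tanh ze = xe := tanh_arctanh' hxe1 hxe2
  have hKxe : K * xe = D := mul_div_cancel₀ _ hK.ne'
  refine ⟨habs, ⟨hxe1, hxe2⟩, ?_, ?_, ?_⟩
  · intro a ha b hb hab
    have h1 : Real.tanh a < Real.tanh b := tanh_strictMono' hab
    have h2 : Real.tanh b ≤ xe := hte ▸ tanh_strictMono'.monotone hb
    have h2' : K * Real.tanh b ≤ D := by
      calc K * Real.tanh b ≤ K * xe := mul_le_mul_of_nonneg_left h2 hK.le
      _ = D := hKxe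
    have h1' : K * Real.tanh a < D := lt_of_lt_of_le ((mul_lt_mul_iff_right₀ hK).2 h1) h2'
    rw [hΩ a, hΩ b]
    nlinarith [mul_pos (sub_pos.2 h1)
      (show (0:ℝ) < 2 * D - K * Real.tanh a - K * Real.tanh b by linarith)]
  · intro a ha b hb hab
    have h1 : Real.tanh a < Real.tanh b := tanh_strictMono' hab
    have h2 : xe ≤ Real.tanh a := hte ▸ tanh_strictMono'.monotone ha
    have h2' : D ≤ K * Real.tanh a := by
      calc D = K * xe := hKxe.symm
      _ ≤ K * Real.tanh a := mul_le_mul_of_nonneg_left h2 hK.le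
    have h1' : D < K * Real.tanh b := lt_of_le_of_lt h2' ((mul_lt_mul_iff_right₀ hK).2 h1)
    rw [hΩ a, hΩ b]
    nlinarith [mul_pos (sub_pos.2 h1)
      (show (0:ℝ) < K * Real.tanh a + K * Real.tanh b - 2 * D by linarith)]
  · intro z hz
    have hne : Real.tanh z ≠ xe := fun h =>
      hz (tanh_strictMono'.injective (h.trans hte.symm))
    have hsq : 0 < (xe - Real.tanh z) ^ 2 := by
      have h : xe - Real.tanh z ≠ 0 := sub_ne_zero.2 hne.symm
      positivity
    have hKxe' : K * xe = β ^ 2 - α ^ 2 := hKxe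
    have e1 : K * xe ^ 2 = β ^ 2 * xe - α ^ 2 * xe := by
      rw [pow_two, ← mul_assoc, hKxe']; ring
    have e2 : K * (xe * Real.tanh z) = β ^ 2 * Real.tanh z - α ^ 2 * Real.tanh z := by
      rw [← mul_assoc, hKxe']; ring
    rw [hΩ z, hΩ ze, hte]
    nlinarith [mul_pos hK hsq, e1, e2]
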